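/- arXiv:0902.3045 — 6 statements merged into one kernel-verified Lean document; each statement's English description precedes it below -/
import Mathlib

section
/- Let A : X → Y be a finitely strictly singular bounded operator between Banach spaces, let ε > 0, and let D ⊆ X be a finite-dimensional subspace with dim D sufficiently large (depending on ε and j). Then for every j ≥ 1, if dim D > r + j + 1 for an appropriate r = r(ε, j), there exists a subspace R ⊆ D with dim R = j + 1 such that ‖Ax‖ ≤ ε‖x‖ for all x ∈ R. -/
/-!
Pick `z₀, …, z_j ∈ D` one at a time with `‖A zₖ‖ ≤ δ ‖zₖ‖`, each in the common kernel of
Hahn–Banach norming functionals `φ₀, …, φ_{k-1}` of the earlier vectors; that kernel has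
codimension at most `k` in `D`, so finite strict singularity still applies inside it.
On the span of `z₀, …, z_{k-1}` the functionals control both `x` and `A x`:
`‖x‖ ≤ (2^k - 1) maxᵢ |φᵢ x|` and `‖A x‖ ≤ δ (2^k - 1) maxᵢ |φᵢ x|`, because `φₖ` recovers the
coefficient of `zₖ` in `y + a zₖ` up to the error `φₖ y`. With `δ = ε / 2^(j+1)` and
`|φᵢ x| ≤ ‖x‖` this gives `‖A x‖ ≤ ε ‖x‖`.
-/

open Module

namespace Submodule

variable {K V W : Type*} [Field K] [AddCommGroup V] [Module K V] [AddCommGroup W] [Module K W]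

theorem finrank_le_finrank_inf_ker_add [FiniteDimensional K W] (D : Submodule K V)
    [FiniteDimensional K D] (L : V →ₗ[K] W) :
    finrank K D ≤ finrank K ↥(D ⊓ LinearMap.ker L) + finrank K W := by
  have hker : finrank K (LinearMap.ker (L ∘ₗ D.subtype)) = finrank K ↥(D ⊓ LinearMap.ker L) := by
    rw [LinearMap.ker_comp, ← finrank_map_subtype_eq, map_comap_subtype]
  have := (L ∘ₗ D.subtype).finrank_range_add_finrank_ker
  have := finrank_le (LinearMap.range (L ∘ₗ D.subtype))
  omega

theorem finrank_sup_span_singleton_of_notMem (R : Submodule K V) [FiniteDimensional K R] {v : V}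
    (hv : v ∉ R) : finrank K ↥(R ⊔ span K {v}) = finrank K R + 1 := by
  have := finrank_sup_add_finrank_inf_eq R (span K {v})
  rwa [(disjoint_span_singleton_of_notMem hv).eq_bot, finrank_bot, add_zero,
    finrank_span_singleton (by rintro rfl; exact hv R.zero_mem)] at this

end Submodule

section

variable {X Y : Type*} [NormedAddCommGroup X] [NormedSpace ℝ X] [NormedAddCommGroup Y]
  [NormedSpace ℝ Y]

def DominatedOn (A : X →L[ℝ] Y) (δ C : ℝ) {k : ℕ} (f : Fin k → StrongDual ℝ X)
    (R : Submodule ℝ X) : Prop :=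
  ∀ x ∈ R, ∀ m : ℝ, (∀ i, |f i x| ≤ m) → ‖x‖ ≤ C * m ∧ ‖A x‖ ≤ δ * (C * m)

namespace DominatedOn

variable {A : X →L[ℝ] Y} {δ C : ℝ} {k : ℕ} {f : Fin k → StrongDual ℝ X} {R : Submodule ℝ X}

theorem bot (A : X →L[ℝ] Y) (δ : ℝ) : DominatedOn A δ 0 Fin.elim0 ⊥ := by
  rintro x hx m -
  simp [(Submodule.mem_bot ℝ).1 hx]

theorem eq_zero_of_mem (h : DominatedOn A δ C f R) {z : X} (hzR : z ∈ R)
    (hzf : ∀ i, f i z = 0) : z = 0 := by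
  simpa using (h z hzR 0 fun i => by simp [hzf i]).1

theorem norm_apply_le (h : DominatedOn A δ C f R) (hf : ∀ i, ‖f i‖ ≤ 1) {x : X} (hx : x ∈ R) :
    ‖A x‖ ≤ δ * (C * ‖x‖) :=
  (h x hx ‖x‖ fun i => by
    simpa using ((f i).le_opNorm x).trans (mul_le_of_le_one_left (norm_nonneg x) (hf i))).2

theorem sup_span_singleton (h : DominatedOn A δ C f R) (hδ : 0 ≤ δ) {z : X} {φ : StrongDual ℝ X}
    (hzf : ∀ i, f i z = 0) (hAz : ‖A z‖ ≤ δ * ‖z‖) (hφ : ‖φ‖ ≤ 1) (hφz : φ z = ‖z‖) :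
    DominatedOn A δ (2 * C + 1) (Fin.cons φ f) (R ⊔ Submodule.span ℝ {z}) := by
  intro x hx m hm
  obtain ⟨y, hy, w, hw, rfl⟩ := Submodule.mem_sup.1 hx
  obtain ⟨a, rfl⟩ := Submodule.mem_span_singleton.1 hw
  simp only [Fin.forall_fin_succ, Fin.cons_zero, Fin.cons_succ] at hm
  obtain ⟨hφm, hfm⟩ := hm
  have hm0 : 0 ≤ m := (abs_nonneg _).trans hφm
  obtain ⟨hy_norm, hAy⟩ := h y hy m fun i => by simpa [hzf i] using hfm i
  have hφy : |φ y| ≤ ‖y‖ := by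
    simpa using (φ.le_opNorm y).trans (mul_le_of_le_one_left (norm_nonneg y) hφ)
  have ha : ‖a • z‖ ≤ (C + 1) * m := by
    have : a * ‖z‖ = φ (y + a • z) - φ y := by simp [hφz]
    calc ‖a • z‖ = |a * ‖z‖| := by rw [norm_smul, abs_mul, abs_norm, Real.norm_eq_abs]
      _ ≤ |φ (y + a • z)| + |φ y| := by rw [this]; exact abs_sub _ _
      _ ≤ (C + 1) * m := by linarith
  refine ⟨?_, ?_⟩
  · calc ‖y + a • z‖ ≤ ‖y‖ + ‖a • z‖ := norm_add_le _ _
      _ ≤ (2 * C + 1) * m := by linarith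
  · calc ‖A (y + a • z)‖ ≤ ‖A y‖ + ‖a • A z‖ := by rw [map_add, map_smul]; exact norm_add_le _ _
      _ ≤ δ * (C * m) + δ * ‖a • z‖ := by
          gcongr
          rw [norm_smul, norm_smul, mul_left_comm]
          exact mul_le_mul_of_nonneg_left hAz (norm_nonneg a)
      _ ≤ δ * ((2 * C + 1) * m) := by nlinarith

end DominatedOn

variable {A : X →L[ℝ] Y} {δ : ℝ} {n : ℕ}
  (hn : ∀ Z : Submodule ℝ X, (n : Cardinal) ≤ Module.rank ℝ Z → ∃ z ∈ Z, z ≠ 0 ∧ ‖A z‖ < δ * ‖z‖)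
  (D : Submodule ℝ X) [FiniteDimensional ℝ D]
include hn

theorem exists_mem_ker_norm_apply_le {k : ℕ} (f : Fin k → StrongDual ℝ X)
    (hD : n + k ≤ finrank ℝ D) : ∃ z ∈ D, z ≠ 0 ∧ (∀ i, f i z = 0) ∧ ‖A z‖ ≤ δ * ‖z‖ := by
  let L : X →ₗ[ℝ] Fin k → ℝ := LinearMap.pi fun i => (f i : X →ₗ[ℝ] ℝ)
  have hZ := D.finrank_le_finrank_inf_ker_add L
  rw [Module.finrank_fin_fun] at hZ
  obtain ⟨z, hz, hz0, hAz⟩ := hn (D ⊓ LinearMap.ker L) <| by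
    rw [← Module.finrank_eq_rank]
    exact_mod_cast (by omega : n ≤ finrank ℝ ↥(D ⊓ LinearMap.ker L))
  exact ⟨z, hz.1, hz0, fun i => congrFun (LinearMap.mem_ker.1 hz.2) i, hAz.le⟩

theorem exists_dominatedOn (hδ : 0 ≤ δ) (k : ℕ) (hD : n + k ≤ finrank ℝ D) :
    ∃ R ≤ D, ∃ f : Fin k → StrongDual ℝ X,
      finrank ℝ R = k ∧ (∀ i, ‖f i‖ ≤ 1) ∧ DominatedOn A δ (2 ^ k - 1) f R := by
  induction k with
  | zero =>
    exact ⟨⊥, bot_le, Fin.elim0, finrank_bot ℝ X, fun i => i.elim0, by simpa using .bot A δ⟩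
  | succ k ih =>
    obtain ⟨R, hRD, f, hR, hf, hdom⟩ := ih (by omega)
    obtain ⟨z, hzD, hz0, hzf, hAz⟩ := exists_mem_ker_norm_apply_le hn D f (by omega)
    obtain ⟨φ, hφ, hφz⟩ := exists_dual_vector ℝ z (norm_ne_zero_iff.2 hz0)
    have := Submodule.finiteDimensional_of_le hRD
    refine ⟨R ⊔ Submodule.span ℝ {z}, sup_le hRD ((Submodule.span_singleton_le_iff_mem _ _).2 hzD),
      Fin.cons φ f, ?_, ?_, ?_⟩
    · rw [R.finrank_sup_span_singleton_of_notMem fun hzR => hz0 (hdom.eq_zero_of_mem hzR hzf), hR]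
    · exact Fin.cases hφ.le hf
    · convert hdom.sup_span_singleton hδ hzf hAz hφ.le hφz using 1
      ring

end

theorem stmt3_general {X Y : Type*} [NormedAddCommGroup X] [NormedSpace ℝ X]
    [NormedAddCommGroup Y] [NormedSpace ℝ Y] (A : X →L[ℝ] Y)
    (hA : ∀ ε > (0 : ℝ), ∃ n : ℕ, ∀ Z : Submodule ℝ X, (n : Cardinal) ≤ Module.rank ℝ Z →
      ∃ z ∈ Z, z ≠ 0 ∧ ‖A z‖ < ε * ‖z‖) :
    ∀ ε > (0 : ℝ), ∀ j : ℕ, 1 ≤ j → ∃ r : ℕ, ∀ D : Submodule ℝ X, FiniteDimensional ℝ D →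
      r + j + 1 < finrank ℝ D →
      ∃ R : Submodule ℝ X, R ≤ D ∧ finrank ℝ R = j + 1 ∧
        ∀ x ∈ R, ‖A x‖ ≤ ε * ‖x‖ := by
  intro ε hε j _
  have hδ : 0 < ε / 2 ^ (j + 1) := by positivity
  obtain ⟨n, hn⟩ := hA _ hδ
  refine ⟨n, fun D _ hD => ?_⟩
  obtain ⟨R, hRD, f, hR, hf, hdom⟩ := exists_dominatedOn hn D hδ.le (j + 1) (by omega)
  refine ⟨R, hRD, hR, fun x hx => ?_⟩
  calc ‖A x‖ ≤ ε / 2 ^ (j + 1) * ((2 ^ (j + 1) - 1) * ‖x‖) := hdom.norm_apply_le hf hx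
    _ ≤ ε * ‖x‖ := by
      rw [div_mul_eq_mul_div, div_le_iff₀ (by positivity)]
      nlinarith [norm_nonneg x]

/-- From finite strict singularity one can extract, inside any finite-dimensional subspace
of large enough dimension, a subspace of dimension `j + 1` on which `A` has norm at most `ε`. -/
theorem stmt3 {X Y : Type*} [NormedAddCommGroup X] [NormedSpace ℝ X] [CompleteSpace X]
    [NormedAddCommGroup Y] [NormedSpace ℝ Y] [CompleteSpace Y] (A : X →L[ℝ] Y)
    (hA : ∀ ε > (0 : ℝ), ∃ n : ℕ, ∀ Z : Submodule ℝ X, (n : Cardinal) ≤ Module.rank ℝ Z →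
      ∃ z ∈ Z, z ≠ 0 ∧ ‖A z‖ < ε * ‖z‖) :
    ∀ ε > (0 : ℝ), ∀ j : ℕ, 1 ≤ j → ∃ r : ℕ, ∀ D : Submodule ℝ X, FiniteDimensional ℝ D →
      r + j + 1 < finrank ℝ D →
      ∃ R : Submodule ℝ X, R ≤ D ∧ finrank ℝ R = j + 1 ∧
        ∀ x ∈ R, ‖A x‖ ≤ ε * ‖x‖ :=
  stmt3_general A hA
end

section
/- Let (M_n) and (N_n) be sequences of closed subspaces of a Banach space X with δ(M_n, N_n) → 0 and dim M_n → ∞. Then there exist a subsequence and, for each n in it, subspaces H_n ⊆ M_n and G_n ⊆ N_n with dim H_n = dim G_n, dim H_n → ∞, and both δ(H_n, G_n) → 0 and δ(G_n, H_n) → 0. -/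
/-!
Inside `M` one builds, by Hahn–Banach, unit vectors `e₀, …, e_{k-1}` and functionals of norm
at most one with `fᵢ eᵢ = 1` and `fⱼ eᵢ = 0` for `j < i`. Since `f₀` sees only the first
coordinate of `x = ∑ aᵢ eᵢ`, peeling off coordinates one at a time gives
`∑ |aᵢ| ≤ 2ᵏ ‖x‖`, uniformly in the ambient subspace. Moving each `eᵢ` by less than `δ` into
`N` therefore moves every unit vector of `span e` by at most `2ᵏ δ`; when `2ᵏ δ ≤ 1/2` the moved
vectors still satisfy such a bound (with `2ᵏ⁺¹`), so they are independent and the gaps between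
the two spans are at most `2ᵏ δ` and `2ᵏ⁺¹ δ`. It remains to pass to a subsequence whose `k`-th term has
`rank M ≥ k` and `δ(M, N)` small compared with `2⁻ᵏ`.
-/

open Filter Module

/-- The gap `δ(M, P) = sup { dist(x, P) : x ∈ M, ‖x‖ = 1 }` between subspaces. -/
noncomputable def subspaceGap {X : Type*} [NormedAddCommGroup X] [NormedSpace ℝ X]
    (M P : Submodule ℝ X) : ℝ :=
  sSup {d : ℝ | ∃ x ∈ M, ‖x‖ = 1 ∧ d = Metric.infDist x (P : Set X)}

open Submodule Set

section Gap

variable {X : Type*} [NormedAddCommGroup X] [NormedSpace ℝ X]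

lemma subspaceGap_nonneg (M P : Submodule ℝ X) : 0 ≤ subspaceGap M P := by
  apply Real.sSup_nonneg
  rintro d ⟨x, -, -, rfl⟩
  exact Metric.infDist_nonneg

lemma infDist_le_subspaceGap {M P : Submodule ℝ X} {x : X} (hx : x ∈ M) (hx1 : ‖x‖ = 1) :
    Metric.infDist x (P : Set X) ≤ subspaceGap M P := by
  refine le_csSup ⟨1, ?_⟩ ⟨x, hx, hx1, rfl⟩
  rintro d ⟨y, -, hy1, rfl⟩
  simpa [hy1] using Metric.infDist_le_dist_of_mem (x := y) P.zero_mem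

lemma subspaceGap_le {M P : Submodule ℝ X} {c : ℝ} (hc : 0 ≤ c)
    (h : ∀ x ∈ M, ‖x‖ = 1 → Metric.infDist x (P : Set X) ≤ c) : subspaceGap M P ≤ c := by
  refine Real.sSup_le ?_ hc
  rintro d ⟨x, hx, hx1, rfl⟩
  exact h x hx hx1

lemma exists_mem_norm_sub_lt_of_subspaceGap_lt {M P : Submodule ℝ X} {x : X} {δ : ℝ}
    (hx : x ∈ M) (hx1 : ‖x‖ = 1) (h : subspaceGap M P < δ) : ∃ y ∈ P, ‖x - y‖ < δ := by
  obtain ⟨y, hy, hxy⟩ := (Metric.infDist_lt_iff ⟨0, P.zero_mem⟩).1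
    ((infDist_le_subspaceGap hx hx1).trans_lt h)
  exact ⟨y, hy, by rwa [← dist_eq_norm]⟩

end Gap

section Perturbation

variable {X : Type*} [NormedAddCommGroup X] [NormedSpace ℝ X] {ι : Type*} [Fintype ι]
  {e g : ι → X} {C δ : ℝ}

lemma linearIndependent_of_sum_abs_le (hC : ∀ a : ι → ℝ, ∑ i, |a i| ≤ C * ‖∑ i, a i • e i‖) :
    LinearIndependent ℝ e := by
  refine Fintype.linearIndependent_iff.2 fun a ha i => abs_eq_zero.1 (le_antisymm ?_ (abs_nonneg _))
  calc |a i| ≤ ∑ j, |a j| := Finset.single_le_sum (fun j _ => abs_nonneg (a j)) (Finset.mem_univ i)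
    _ ≤ 0 := by simpa [ha] using hC a

lemma norm_sum_smul_sub_sum_smul_le (h : ∀ i, ‖e i - g i‖ ≤ δ) (a : ι → ℝ) :
    ‖∑ i, a i • e i - ∑ i, a i • g i‖ ≤ δ * ∑ i, |a i| := by
  rw [← Finset.sum_sub_distrib, Finset.mul_sum]
  refine (norm_sum_le _ _).trans (Finset.sum_le_sum fun i _ => ?_)
  rw [← smul_sub, norm_smul, Real.norm_eq_abs, mul_comm]
  exact mul_le_mul_of_nonneg_right (h i) (abs_nonneg _)

lemma sum_abs_le_of_norm_sub_le (hC0 : 0 ≤ C)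
    (hC : ∀ a : ι → ℝ, ∑ i, |a i| ≤ C * ‖∑ i, a i • e i‖) (h : ∀ i, ‖e i - g i‖ ≤ δ)
    (hCδ : C * δ ≤ 1 / 2) (a : ι → ℝ) : ∑ i, |a i| ≤ 2 * C * ‖∑ i, a i • g i‖ := by
  have he : ‖∑ i, a i • e i‖ ≤ ‖∑ i, a i • g i‖ + δ * ∑ i, |a i| :=
    (norm_le_norm_add_norm_sub' _ _).trans (by gcongr; exact norm_sum_smul_sub_sum_smul_le h a)
  have hsum : 0 ≤ ∑ i, |a i| := Finset.sum_nonneg fun i _ => abs_nonneg (a i)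
  nlinarith [hC a, mul_le_mul_of_nonneg_left he hC0, mul_le_mul_of_nonneg_right hCδ hsum]

lemma subspaceGap_span_le (hC0 : 0 ≤ C) (hδ : 0 ≤ δ)
    (hC : ∀ a : ι → ℝ, ∑ i, |a i| ≤ C * ‖∑ i, a i • e i‖) (h : ∀ i, ‖e i - g i‖ ≤ δ) :
    subspaceGap (span ℝ (range e)) (span ℝ (range g)) ≤ C * δ := by
  refine subspaceGap_le (mul_nonneg hC0 hδ) fun x hx hx1 => ?_
  obtain ⟨a, rfl⟩ := (mem_span_range_iff_exists_fun ℝ).1 hx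
  calc Metric.infDist (∑ i, a i • e i) (span ℝ (range g) : Set X)
      ≤ dist (∑ i, a i • e i) (∑ i, a i • g i) :=
        Metric.infDist_le_dist_of_mem ((mem_span_range_iff_exists_fun ℝ).2 ⟨a, rfl⟩)
    _ ≤ δ * ∑ i, |a i| := by rw [dist_eq_norm]; exact norm_sum_smul_sub_sum_smul_le h a
    _ ≤ δ * C := by gcongr; simpa [hx1] using hC a
    _ = C * δ := mul_comm _ _

end Perturbation

section Triangular

variable {X : Type*} [NormedAddCommGroup X] [NormedSpace ℝ X]

structure IsTriangularBiorthogonal {k : ℕ} (e : Fin k → X) (f : Fin k → StrongDual ℝ X) :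
    Prop where
  norm_vector : ∀ i, ‖e i‖ = 1
  norm_functional_le : ∀ i, ‖f i‖ ≤ 1
  apply_self : ∀ i, f i (e i) = 1
  apply_of_lt : ∀ {i j}, j < i → f j (e i) = 0

namespace IsTriangularBiorthogonal

variable {k : ℕ} {e : Fin k → X} {f : Fin k → StrongDual ℝ X}

lemma tail {e : Fin (k + 1) → X} {f : Fin (k + 1) → StrongDual ℝ X}
    (h : IsTriangularBiorthogonal e f) :
    IsTriangularBiorthogonal (fun i => e i.succ) (fun i => f i.succ) where
  norm_vector i := h.norm_vector i.succ
  norm_functional_le i := h.norm_functional_le i.succ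
  apply_self i := h.apply_self i.succ
  apply_of_lt hji := h.apply_of_lt (Fin.succ_lt_succ_iff.2 hji)

lemma snoc (h : IsTriangularBiorthogonal e f) {y : X} {g : StrongDual ℝ X} (hy : ‖y‖ = 1)
    (hg : ‖g‖ ≤ 1) (hgy : g y = 1) (hfy : ∀ j, f j y = 0) :
    IsTriangularBiorthogonal (Fin.snoc e y : Fin (k + 1) → X) (Fin.snoc f g) where
  norm_vector i := by cases i using Fin.lastCases <;> simp [hy, h.norm_vector]
  norm_functional_le i := by cases i using Fin.lastCases <;> simp [hg, h.norm_functional_le]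
  apply_self i := by cases i using Fin.lastCases <;> simp [hgy, h.apply_self]
  apply_of_lt {i j} hji := by
    cases i using Fin.lastCases with
    | last =>
      cases j using Fin.lastCases with
      | last => exact absurd hji (lt_irrefl _)
      | cast j => simpa using hfy j
    | cast i =>
      cases j using Fin.lastCases with
      | last => exact absurd hji (not_lt.2 (Fin.le_last _))
      | cast j => simpa using h.apply_of_lt (Fin.castSucc_lt_castSucc_iff.1 hji)

lemma sum_abs_le (h : IsTriangularBiorthogonal e f) (a : Fin k → ℝ) :
    ∑ i, |a i| ≤ (2 ^ k - 1) * ‖∑ i, a i • e i‖ := by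
  induction k with
  | zero => simp
  | succ k ih =>
    set x := ∑ i, a i • e i
    set y := ∑ i : Fin k, a i.succ • e i.succ
    have hx : x = a 0 • e 0 + y := Fin.sum_univ_succ _
    have hfx : f 0 x = a 0 := by
      simp [hx, y, h.apply_self, h.apply_of_lt (Fin.succ_pos _)]
    have ha : |a 0| ≤ ‖x‖ := by
      simpa [hfx] using (f 0).le_of_opNorm_le (h.norm_functional_le 0) x
    have hy : ‖y‖ ≤ 2 * ‖x‖ := by
      have : y = x - a 0 • e 0 := by rw [hx, add_sub_cancel_left]
      calc ‖y‖ ≤ ‖x‖ + ‖a 0 • e 0‖ := this ▸ norm_sub_le _ _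
        _ ≤ 2 * ‖x‖ := by rw [norm_smul, h.norm_vector, Real.norm_eq_abs]; linarith
    have hk : (1 : ℝ) ≤ 2 ^ k := one_le_pow₀ (by norm_num)
    calc ∑ i, |a i| = |a 0| + ∑ i : Fin k, |a i.succ| := Fin.sum_univ_succ _
      _ ≤ ‖x‖ + (2 ^ k - 1) * (2 * ‖x‖) :=
        add_le_add ha ((ih h.tail _).trans (mul_le_mul_of_nonneg_left hy (by linarith)))
      _ = (2 ^ (k + 1) - 1) * ‖x‖ := by ring

end IsTriangularBiorthogonal

lemma exists_mem_norm_eq_one_forall_apply_eq_zero (M : Submodule ℝ X) {k : ℕ}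
    (f : Fin k → StrongDual ℝ X) (hk : (k + 1 : Cardinal) ≤ Module.rank ℝ M) :
    ∃ y ∈ M, ‖y‖ = 1 ∧ ∀ j, f j y = 0 := by
  let L : M →ₗ[ℝ] Fin k → ℝ := LinearMap.pi (fun j => (f j : X →ₗ[ℝ] ℝ)) ∘ₗ M.subtype
  have hL : ¬ Function.Injective L := fun hL => by
    have := hk.trans (by simpa using L.lift_rank_le_of_injective hL)
    norm_cast at this
    omega
  obtain ⟨x, hLx, hx0⟩ : ∃ x, L x = 0 ∧ x ≠ 0 := by
    simpa [injective_iff_map_eq_zero, not_forall] using hL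
  refine ⟨‖(x : X)‖⁻¹ • (x : X), M.smul_mem _ x.2, norm_smul_inv_norm (by simpa using hx0),
    fun j => ?_⟩
  rw [map_smul, show f j x = 0 by simpa [L] using congrFun hLx j, smul_zero]

lemma exists_isTriangularBiorthogonal (M : Submodule ℝ X) :
    ∀ k : ℕ, (k : Cardinal) ≤ Module.rank ℝ M →
      ∃ (e : Fin k → X) (f : Fin k → StrongDual ℝ X),
        (∀ i, e i ∈ M) ∧ IsTriangularBiorthogonal e f
  | 0, _ => ⟨finZeroElim, finZeroElim, finZeroElim, finZeroElim, finZeroElim, finZeroElim,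
      fun {i} => i.elim0⟩
  | k + 1, hk => by
    obtain ⟨e, f, heM, h⟩ :=
      exists_isTriangularBiorthogonal M k ((Nat.cast_le.2 k.le_succ).trans hk)
    obtain ⟨y, hyM, hy, hfy⟩ := exists_mem_norm_eq_one_forall_apply_eq_zero M f (by simpa using hk)
    obtain ⟨g, hg, hgy⟩ := exists_dual_vector'' ℝ y
    refine ⟨Fin.snoc e y, Fin.snoc f g, fun i => ?_, h.snoc hy hg (by simpa [hy] using hgy) hfy⟩
    cases i using Fin.lastCases <;> simp [hyM, heM]

end Triangular

lemma exists_finrank_eq_subspaceGap_le {X : Type*} [NormedAddCommGroup X] [NormedSpace ℝ X]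
    (M N : Submodule ℝ X) {k : ℕ} (hk : (k : Cardinal) ≤ Module.rank ℝ M) {ε : ℝ}
    (hε : ε ≤ 1 / 2) (hMN : subspaceGap M N < ε / 2 ^ k) :
    ∃ H G : Submodule ℝ X, H ≤ M ∧ G ≤ N ∧ FiniteDimensional ℝ H ∧ FiniteDimensional ℝ G ∧
      finrank ℝ H = k ∧ finrank ℝ G = k ∧ subspaceGap H G ≤ ε ∧ subspaceGap G H ≤ 2 * ε := by
  obtain ⟨e, f, heM, he⟩ := exists_isTriangularBiorthogonal M k hk
  choose g hgN hge using fun i =>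
    exists_mem_norm_sub_lt_of_subspaceGap_lt (heM i) (he.norm_vector i) hMN
  set C : ℝ := 2 ^ k
  have hC0 : 0 ≤ C := by positivity
  have hδ : 0 ≤ ε / C := (subspaceGap_nonneg M N).trans hMN.le
  have hCδ : C * (ε / C) = ε := mul_div_cancel₀ ε (by positivity)
  have heg : ∀ i, ‖e i - g i‖ ≤ ε / C := fun i => (hge i).le
  have heC : ∀ a : Fin k → ℝ, ∑ i, |a i| ≤ C * ‖∑ i, a i • e i‖ := fun a =>
    (he.sum_abs_le a).trans (mul_le_mul_of_nonneg_right (by linarith) (norm_nonneg _))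
  have hgC := sum_abs_le_of_norm_sub_le hC0 heC heg (hCδ.trans_le hε)
  refine ⟨span ℝ (range e), span ℝ (range g), span_le.2 (range_subset_iff.2 heM),
    span_le.2 (range_subset_iff.2 hgN), .span_of_finite ℝ (finite_range e),
    .span_of_finite ℝ (finite_range g), ?_, ?_,
    hCδ ▸ subspaceGap_span_le hC0 hδ heC heg, ?_⟩
  · rw [finrank_span_eq_card (linearIndependent_of_sum_abs_le heC), Fintype.card_fin]
  · rw [finrank_span_eq_card (linearIndependent_of_sum_abs_le hgC), Fintype.card_fin]
  · calc subspaceGap (span ℝ (range g)) (span ℝ (range e)) ≤ 2 * C * (ε / C) :=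
          subspaceGap_span_le (by positivity) hδ hgC fun i => norm_sub_rev (g i) (e i) ▸ heg i
      _ = 2 * ε := by rw [mul_assoc, hCδ]

theorem stmt7_general {X : Type*} [NormedAddCommGroup X] [NormedSpace ℝ X]
    (M N : ℕ → Submodule ℝ X)
    (hgap : Tendsto (fun n => subspaceGap (M n) (N n)) atTop (nhds 0))
    (hdim : ∀ k : ℕ, ∃ n₀ : ℕ, ∀ n ≥ n₀, (k : Cardinal) ≤ Module.rank ℝ (M n)) :
    ∃ φ : ℕ → ℕ, StrictMono φ ∧ ∃ H G : ℕ → Submodule ℝ X,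
      (∀ n, H n ≤ M (φ n) ∧ G n ≤ N (φ n) ∧ FiniteDimensional ℝ (H n) ∧
        FiniteDimensional ℝ (G n) ∧ finrank ℝ (H n) = finrank ℝ (G n)) ∧
      Tendsto (fun n => finrank ℝ (H n)) atTop atTop ∧
      Tendsto (fun n => subspaceGap (H n) (G n)) atTop (nhds 0) ∧
      Tendsto (fun n => subspaceGap (G n) (H n)) atTop (nhds 0) := by
  set ε : ℕ → ℝ := fun n => (1 / 2) ^ (n + 1)
  have hε_le : ∀ n, ε n ≤ 1 / 2 := fun n =>
    pow_le_of_le_one (by norm_num) (by norm_num) n.succ_ne_zero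
  have hε : Tendsto ε atTop (nhds 0) :=
    (tendsto_pow_atTop_nhds_zero_of_lt_one (by norm_num) (by norm_num)).comp
      (tendsto_add_atTop_nat 1)
  obtain ⟨φ, hφ, hφMN⟩ := extraction_forall_of_eventually fun n =>
    (eventually_atTop.2 (hdim n)).and (hgap.eventually_lt_const (by positivity : 0 < ε n / 2 ^ n))
  choose H G hHM hGN hH hG hHk hGk hHG hGH using fun n =>
    exists_finrank_eq_subspaceGap_le (M (φ n)) (N (φ n)) (hφMN n).1 (hε_le n) (hφMN n).2
  refine ⟨φ, hφ, H, G, fun n => ⟨hHM n, hGN n, hH n, hG n, (hHk n).trans (hGk n).symm⟩, ?_,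
    squeeze_zero (fun n => subspaceGap_nonneg _ _) hHG hε,
    squeeze_zero (fun n => subspaceGap_nonneg _ _) hGH (by simpa using hε.const_mul 2)⟩
  simp only [hHk]
  exact tendsto_id

/-- If `δ(M_n, N_n) → 0` and `dim M_n → ∞`, then along a subsequence there are
equal (finite) dimensional subspaces `H_n ⊆ M_n`, `G_n ⊆ N_n` with dimensions tending
to infinity and gaps in both directions tending to `0`. -/
theorem stmt7 {X : Type*} [NormedAddCommGroup X] [NormedSpace ℝ X] [CompleteSpace X]
    (M N : ℕ → Submodule ℝ X)
    (hMc : ∀ n, IsClosed ((M n : Set X))) (hNc : ∀ n, IsClosed ((N n : Set X)))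
    (hgap : Tendsto (fun n => subspaceGap (M n) (N n)) atTop (nhds 0))
    (hdim : ∀ k : ℕ, ∃ n₀ : ℕ, ∀ n ≥ n₀, (k : Cardinal) ≤ Module.rank ℝ (M n)) :
    ∃ φ : ℕ → ℕ, StrictMono φ ∧ ∃ H G : ℕ → Submodule ℝ X,
      (∀ n, H n ≤ M (φ n) ∧ G n ≤ N (φ n) ∧ FiniteDimensional ℝ (H n) ∧
        FiniteDimensional ℝ (G n) ∧ finrank ℝ (H n) = finrank ℝ (G n)) ∧
      Tendsto (fun n => finrank ℝ (H n)) atTop atTop ∧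
      Tendsto (fun n => subspaceGap (H n) (G n)) atTop (nhds 0) ∧
      Tendsto (fun n => subspaceGap (G n) (H n)) atTop (nhds 0) :=
  stmt7_general M N hgap hdim
end

section
/- Let M, N be closed subspaces of a Banach space X such that M ∩ N = {0}, M + N is not closed, and let M_k ⊆ M be a closed subspace of finite codimension in M. Then M_k + N is not closed. -/
/-!
Pick a finite-dimensional complement `F` of `M_k` inside `M`. Then
`M + N = (M_k + N) + F`, and a closed subspace plus a finite-dimensional one is closed, so
closedness of `M_k + N` would force closedness of `M + N`.
-/

namespace Submodule

theorem exists_finiteDimensional_sup_eq_of_le {K V : Type*} [DivisionRing K] [AddCommGroup V]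
    [Module K V] {s t : Submodule K V} (hst : s ≤ t)
    [FiniteDimensional K (t ⧸ s.comap t.subtype)] :
    ∃ F : Submodule K V, FiniteDimensional K F ∧ s ⊔ F = t := by
  obtain ⟨q, hq⟩ := (s.comap t.subtype).exists_isCompl
  have : FiniteDimensional K q := .of_fg <| CoFG.fg_of_isCompl hq inferInstance
  refine ⟨q.map t.subtype, inferInstance, ?_⟩
  have hsup := congrArg (map t.subtype) hq.sup_eq_top
  rwa [map_sup, map_comap_subtype, inf_eq_right.mpr hst, map_subtype_top] at hsup

variable {𝕜 E : Type*} [NontriviallyNormedField 𝕜] [CompleteSpace 𝕜]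
  [AddCommGroup E] [TopologicalSpace E] [IsTopologicalAddGroup E] [Module 𝕜 E]
  [ContinuousSMul 𝕜 E]

theorem isClosed_sup_of_isClosed_sup_of_le {s t u : Submodule 𝕜 E} (hst : s ≤ t)
    [FiniteDimensional 𝕜 (t ⧸ s.comap t.subtype)]
    (hsu : IsClosed ((s ⊔ u : Submodule 𝕜 E) : Set E)) :
    IsClosed ((t ⊔ u : Submodule 𝕜 E) : Set E) := by
  obtain ⟨F, hF, rfl⟩ := exists_finiteDimensional_sup_eq_of_le hst
  rw [sup_right_comm]
  exact isClosed_sup_finiteDimensional _ F hsu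

end Submodule

theorem stmt10_general {X : Type*} [NormedAddCommGroup X] [NormedSpace ℝ X]
    (M N Mk : Submodule ℝ X) (hsum : ¬IsClosed ((M ⊔ N : Submodule ℝ X) : Set X))
    (hMkM : Mk ≤ M)
    (hcodim : FiniteDimensional ℝ (M ⧸ Mk.comap M.subtype)) :
    ¬IsClosed ((Mk ⊔ N : Submodule ℝ X) : Set X) :=
  fun hclosed => hsum (Submodule.isClosed_sup_of_isClosed_sup_of_le hMkM hclosed)

/-- If `M ∩ N = {0}`, `M + N` is not closed, and `M_k ⊆ M` is a closed subspace of finite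
codimension in `M`, then `M_k + N` is not closed. -/
theorem stmt10 {X : Type*} [NormedAddCommGroup X] [NormedSpace ℝ X] [CompleteSpace X]
    (M N Mk : Submodule ℝ X) (hM : IsClosed (M : Set X)) (hN : IsClosed (N : Set X))
    (hMN : M ⊓ N = ⊥) (hsum : ¬IsClosed ((M ⊔ N : Submodule ℝ X) : Set X))
    (hMkM : Mk ≤ M) (hMkc : IsClosed ((Mk : Set X)))
    (hcodim : FiniteDimensional ℝ (M ⧸ Mk.comap M.subtype)) :
    ¬IsClosed ((Mk ⊔ N : Submodule ℝ X) : Set X) :=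
  stmt10_general M N Mk hsum hMkM hcodim
end

section
/- Let M, N, S be closed subspaces of a Banach space X such that M + N is closed and M + N = (M ∩ N) ⊕ S. Then the natural map Φ : (M ∩ S) × (M ∩ N) × (N ∩ S) → M + N given by Φ(u, t, v) = u + t + v is a continuous linear bijection with continuous inverse, where the product carries the max norm. -/
/-!
Every `x ∈ M + N` splits as `m + n` with `m ∈ M`, `n ∈ N`, and each of `m`, `n` splits along
`(M ∩ N) ⊕ S`; the `S`-part of `m` lies in `M ∩ S` and that of `n` in `N ∩ S`, which gives
surjectivity. Injectivity comes from `M ∩ N ∩ S = 0`: in `u + t + v = 0` the summand `v` lies in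
`M ∩ N ∩ S`, and then so does `u`. All four spaces are complete, so the bounded inverse theorem
makes the inverse continuous.
-/

namespace Submodule

section Algebraic

variable {R E : Type*} [Ring R] [AddCommGroup E] [Module R E] {M N S : Submodule R E}

theorem add_add_mem_sup {u t v : E} (hu : u ∈ M ⊓ S) (ht : t ∈ M ⊓ N) (hv : v ∈ N ⊓ S) :
    u + t + v ∈ M ⊔ N :=
  add_mem (add_mem (mem_sup_left hu.1) (mem_sup_left ht.1)) (mem_sup_right hv.1)

theorem eq_zero_of_add_add_eq_zero (hdisj : M ⊓ N ⊓ S = ⊥) {u t v : E} (hu : u ∈ M ⊓ S)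
    (ht : t ∈ M ⊓ N) (hv : v ∈ N ⊓ S) (h : u + t + v = 0) : u = 0 ∧ t = 0 ∧ v = 0 := by
  have mem_bot : ∀ {x}, x ∈ M → x ∈ N → x ∈ S → x = 0 := fun hM hN hS =>
    (mem_bot R).mp (hdisj ▸ ⟨⟨hM, hN⟩, hS⟩)
  have hv0 : v = 0 := by
    refine mem_bot ?_ hv.1 hv.2
    rw [eq_neg_of_add_eq_zero_right h]
    exact neg_mem (add_mem hu.1 ht.1)
  rw [hv0, add_zero] at h
  have hu0 : u = 0 := by
    refine mem_bot hu.1 ?_ hu.2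
    rw [eq_neg_of_add_eq_zero_left h]
    exact neg_mem ht.2
  rw [hu0, zero_add] at h
  exact ⟨hu0, h, hv0⟩

theorem exists_add_add_eq_of_mem_sup (hdecomp : M ⊔ N = M ⊓ N ⊔ S) {x : E} (hx : x ∈ M ⊔ N) :
    ∃ u ∈ M ⊓ S, ∃ t ∈ M ⊓ N, ∃ v ∈ N ⊓ S, u + t + v = x := by
  obtain ⟨m, hm, n, hn, rfl⟩ := mem_sup.mp hx
  obtain ⟨t₁, ht₁, s₁, hs₁, rfl⟩ := mem_sup.mp (hdecomp ▸ mem_sup_left hm : m ∈ M ⊓ N ⊔ S)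
  obtain ⟨t₂, ht₂, s₂, hs₂, rfl⟩ := mem_sup.mp (hdecomp ▸ mem_sup_right hn : n ∈ M ⊓ N ⊔ S)
  have hs₁M : s₁ ∈ M := by simpa using sub_mem hm ht₁.1
  have hs₂N : s₂ ∈ N := by simpa using sub_mem hn ht₂.2
  exact ⟨s₁, ⟨hs₁M, hs₁⟩, t₁ + t₂, add_mem ht₁ ht₂, s₂, ⟨hs₂N, hs₂⟩, by abel⟩

end Algebraic

section Topological

variable {R E : Type*} [Ring R] [AddCommGroup E] [Module R E] [TopologicalSpace E]
  [ContinuousAdd E]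

variable (M N S : Submodule R E)

def sumOfInfs : ↥(M ⊓ S) × ↥(M ⊓ N) × ↥(N ⊓ S) →L[R] ↥(M ⊔ N) :=
  ContinuousLinearMap.codRestrict
    ((M ⊓ S).subtypeL.comp (.fst R _ _) +
      (M ⊓ N).subtypeL.comp ((ContinuousLinearMap.fst R _ _).comp (.snd R _ _)) +
      (N ⊓ S).subtypeL.comp ((ContinuousLinearMap.snd R _ _).comp (.snd R _ _)))
    (M ⊔ N) fun p => add_add_mem_sup p.1.2 p.2.1.2 p.2.2.2

theorem coe_sumOfInfs_apply (p : ↥(M ⊓ S) × ↥(M ⊓ N) × ↥(N ⊓ S)) :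
    (sumOfInfs M N S p : E) = p.1 + p.2.1 + p.2.2 :=
  rfl

variable {M N S}

theorem sumOfInfs_bijective (hdecomp : M ⊔ N = M ⊓ N ⊔ S) (hdisj : M ⊓ N ⊓ S = ⊥) :
    Function.Bijective (sumOfInfs M N S) := by
  refine ⟨(injective_iff_map_eq_zero _).mpr ?_, ?_⟩
  · rintro ⟨u, t, v⟩ h
    obtain ⟨hu, ht, hv⟩ := eq_zero_of_add_add_eq_zero hdisj u.2 t.2 v.2 (congrArg Subtype.val h)
    simp only [Prod.mk_eq_zero, ← Submodule.coe_eq_zero, hu, ht, hv, and_self]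
  · rintro ⟨x, hx⟩
    obtain ⟨u, hu, t, ht, v, hv, rfl⟩ := exists_add_add_eq_of_mem_sup hdecomp hx
    exact ⟨(⟨u, hu⟩, ⟨t, ht⟩, ⟨v, hv⟩), rfl⟩

end Topological

end Submodule

/-- If `M + N` is closed and `M + N = (M ∩ N) ⊕ S`, then the natural map
`Φ(u, t, v) = u + t + v` from `(M ∩ S) × (M ∩ N) × (N ∩ S)` (with the max norm)
onto `M + N` is a continuous linear bijection with continuous inverse. -/
theorem stmt13 {X : Type*} [NormedAddCommGroup X] [NormedSpace ℝ X] [CompleteSpace X]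
    (M N S : Submodule ℝ X)
    (hM : IsClosed (M : Set X)) (hN : IsClosed (N : Set X)) (hS : IsClosed (S : Set X))
    (hsum : IsClosed ((M ⊔ N : Submodule ℝ X) : Set X))
    (hdecomp : M ⊔ N = (M ⊓ N) ⊔ S) (hdisj : (M ⊓ N) ⊓ S = ⊥) :
    ∃ Φ : (↥(M ⊓ S) × ↥(M ⊓ N) × ↥(N ⊓ S)) ≃L[ℝ] ↥(M ⊔ N),
      ∀ (u : ↥(M ⊓ S)) (t : ↥(M ⊓ N)) (v : ↥(N ⊓ S)),
        ((Φ (u, t, v) : ↥(M ⊔ N)) : X) = (u : X) + (t : X) + (v : X) := by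
  have : CompleteSpace ↥(M ⊓ S) := (hM.inter hS).completeSpace_coe
  have : CompleteSpace ↥(M ⊓ N) := (hM.inter hN).completeSpace_coe
  have : CompleteSpace ↥(N ⊓ S) := (hN.inter hS).completeSpace_coe
  have : CompleteSpace ↥(M ⊔ N) := hsum.completeSpace_coe
  obtain ⟨hinj, hsurj⟩ := Submodule.sumOfInfs_bijective hdecomp hdisj
  refine ⟨.ofBijective (Submodule.sumOfInfs M N S) (LinearMap.ker_eq_bot.mpr hinj)
    (LinearMap.range_eq_top.mpr hsurj), fun u t v => ?_⟩
  exact Submodule.coe_sumOfInfs_apply M N S (u, t, v)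
end

section
/- Let M_n ⊆ ℓ∞ be the subspace of sequences supported on B_n, where (B_n) is a partition of ℕ into nonempty finite disjoint sets. Then the lower uniform λ-adjustment of (M_n) with the null subspace satisfies λ_ℕ[M_n, {0}] ≥ 1/2. -/
/-! The indicator vectors of the `B n` are unit vectors of the `M n` at mutual distance `1`.
By the triangle inequality no two of them lie within `1/2` of the same `z`, so along any
infinite set of indices `‖1_{B n} - z‖ ≥ 1/2` for all but at most one `n`; hence the limsup
in the definition of `λ_ℕ` is at least `1/2` whatever `z` is chosen. -/

def lowerAdjSet {X : Type*} [NormedAddCommGroup X] [NormedSpace ℝ X]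
    (N' : Set ℕ) (M P : ℕ → Submodule ℝ X) : Set ℝ :=
  {lam : ℝ | 0 ≤ lam ∧
    ∀ η > (0 : ℝ), ∀ N'' ⊆ N', N''.Infinite →
      ∀ x : ℕ → X, (∀ n ∈ N'', x n ∈ M n ∧ ‖x n‖ = 1) →
        ∃ N''' ⊆ N'', N'''.Infinite ∧
          ∃ y : ℕ → X, (∀ n ∈ N''', y n ∈ P n) ∧ ∃ z : X,
            Filter.limsup (fun n => ‖x n - y n - z‖)
              (Filter.atTop ⊓ Filter.principal N''') ≤ lam + η}

noncomputable def lambdaAdj {X : Type*} [NormedAddCommGroup X] [NormedSpace ℝ X]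
    (N' : Set ℕ) (M P : ℕ → Submodule ℝ X) : ℝ :=
  sInf (lowerAdjSet N' M P)

open Filter Set

lemma Set.Infinite.atTop_inf_principal_neBot {s : Set ℕ} (hs : s.Infinite) :
    (atTop ⊓ 𝓟 s).NeBot :=
  Nat.cofinite_eq_atTop ▸ hs.cofinite_inf_principal_neBot

lemma half_le_limsup_dist_of_separated {X : Type*} [PseudoMetricSpace X] {x : ℕ → X}
    {s : Set ℕ} {r : ℝ} (hs : s.Infinite)
    (hsep : ∀ m ∈ s, ∀ n ∈ s, m ≠ n → r ≤ dist (x m) (x n)) (z : X)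
    (hbdd : IsBoundedUnder (· ≤ ·) (atTop ⊓ 𝓟 s) fun n => dist (x n) z) :
    r / 2 ≤ limsup (fun n => dist (x n) z) (atTop ⊓ 𝓟 s) := by
  have hclose : {n ∈ s | dist (x n) z < r / 2}.Subsingleton := by
    rintro m ⟨hm, hmz⟩ n ⟨hn, hnz⟩
    by_contra hmn
    linarith [hsep m hm n hn hmn, dist_triangle_right (x m) (x n) z]
  have hfar : {n | n ∈ s ∧ r / 2 ≤ dist (x n) z}.Infinite :=
    (hs.sdiff hclose.finite).mono fun n hn => ⟨hn.1, not_lt.1 fun h => hn.2 ⟨hn.1, h⟩⟩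
  exact le_limsup_of_frequently_le
    (frequently_inf_principal.2 (Nat.frequently_atTop_iff_infinite.2 hfar)) hbdd

section indicatorLp

variable {ι : Type*}

noncomputable def indicatorLp (s : Set ι) : lp (fun _ : ι => ℝ) ⊤ :=
  ⟨s.indicator 1, memℓp_infty ⟨1, by
    rintro _ ⟨i, rfl⟩
    simpa using norm_indicator_le_norm_self (1 : ι → ℝ) i⟩⟩

@[simp]
lemma coe_indicatorLp (s : Set ι) : ⇑(indicatorLp s) = s.indicator 1 := rfl

lemma one_le_norm_indicatorLp_sub {s t : Set ι} {i : ι} (hs : i ∈ s) (ht : i ∉ t) :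
    1 ≤ ‖indicatorLp s - indicatorLp t‖ := by
  have h := lp.norm_apply_le_norm ENNReal.top_ne_zero (indicatorLp s - indicatorLp t) i
  rwa [lp.coeFn_sub, Pi.sub_apply, coe_indicatorLp, coe_indicatorLp, indicator_of_mem hs,
    indicator_of_notMem ht, Pi.one_apply, sub_zero, norm_one] at h

lemma norm_indicatorLp {s : Set ι} (hs : s.Nonempty) : ‖indicatorLp s‖ = 1 := by
  refine le_antisymm (lp.norm_le_of_forall_le zero_le_one fun i => ?_) ?_
  · simpa using norm_indicator_le_norm_self (1 : ι → ℝ) i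
  · obtain ⟨i, hi⟩ := hs
    simpa [hi] using lp.norm_apply_le_norm ENNReal.top_ne_zero (indicatorLp s) i

end indicatorLp

section lowerAdjSet

variable {X : Type*} [NormedAddCommGroup X] [NormedSpace ℝ X]

lemma one_mem_lowerAdjSet (N' : Set ℕ) (M P : ℕ → Submodule ℝ X) :
    (1 : ℝ) ∈ lowerAdjSet N' M P := by
  refine ⟨zero_le_one, fun η hη N'' _ hinf x hx => ⟨N'', subset_rfl, hinf, 0,
    fun n _ => zero_mem _, 0, ?_⟩⟩
  have := hinf.atTop_inf_principal_neBot
  have hone : (fun n => ‖x n - (0 : ℕ → X) n - 0‖) =ᶠ[atTop ⊓ 𝓟 N''] fun _ => 1 :=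
    eventually_inf_principal.2 (Eventually.of_forall fun n hn => by simpa using (hx n hn).2)
  rw [limsup_congr hone, limsup_const]
  linarith

lemma half_le_of_mem_lowerAdjSet_bot {N' : Set ℕ} (hN' : N'.Infinite)
    {M : ℕ → Submodule ℝ X} {x : ℕ → X} {r : ℝ} (hxM : ∀ n, x n ∈ M n) (hx : ∀ n, ‖x n‖ = 1)
    (hsep : ∀ m n, m ≠ n → r ≤ ‖x m - x n‖) {lam : ℝ}
    (hlam : lam ∈ lowerAdjSet N' M fun _ => ⊥) : r / 2 ≤ lam := by
  refine le_of_forall_pos_le_add fun η hη => ?_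
  obtain ⟨N''', -, hinf, y, hy, z, hz⟩ :=
    hlam.2 η hη N' subset_rfl hN' x fun n _ => ⟨hxM n, hx n⟩
  have hy0 : ∀ n ∈ N''', x n - y n = x n := fun n hn => by
    rw [(Submodule.mem_bot ℝ).1 (hy n hn), sub_zero]
  have hbdd : IsBoundedUnder (· ≤ ·) (atTop ⊓ 𝓟 N''') fun n => dist (x n - y n) z :=
    isBoundedUnder_of_eventually_le (a := 1 + ‖z‖) <| eventually_inf_principal.2 <|
      Eventually.of_forall fun n hn => by
        rw [hy0 n hn, dist_eq_norm, ← hx n]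
        exact norm_sub_le _ _
  have hsep' : ∀ m ∈ N''', ∀ n ∈ N''', m ≠ n → r ≤ dist (x m - y m) (x n - y n) :=
    fun m hm n hn hmn => by rw [hy0 m hm, hy0 n hn, dist_eq_norm]; exact hsep m n hmn
  simp_rw [← dist_eq_norm] at hz
  exact (half_le_limsup_dist_of_separated hinf hsep' z hbdd).trans hz

lemma half_le_lambdaAdj_bot {N' : Set ℕ} (hN' : N'.Infinite)
    {M : ℕ → Submodule ℝ X} {x : ℕ → X} {r : ℝ} (hxM : ∀ n, x n ∈ M n) (hx : ∀ n, ‖x n‖ = 1)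
    (hsep : ∀ m n, m ≠ n → r ≤ ‖x m - x n‖) : r / 2 ≤ lambdaAdj N' M fun _ => ⊥ :=
  le_csInf ⟨1, one_mem_lowerAdjSet N' M _⟩ fun _ =>
    half_le_of_mem_lowerAdjSet_bot hN' hxM hx hsep

end lowerAdjSet

theorem stmt16_general (B : ℕ → Set ℕ)
    (hBne : ∀ n, (B n).Nonempty)
    (hBdisj : ∀ i j, i ≠ j → Disjoint (B i) (B j))
    (M : ℕ → Submodule ℝ (lp (fun _ : ℕ => ℝ) ⊤))
    (hM : ∀ (n : ℕ) (f : lp (fun _ : ℕ => ℝ) ⊤),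
      f ∈ M n ↔ ∀ i ∉ B n, (f : ∀ _ : ℕ, ℝ) i = 0) :
    (1 : ℝ) / 2 ≤ lambdaAdj Set.univ M (fun _ => (⊥ : Submodule ℝ (lp (fun _ : ℕ => ℝ) ⊤))) := by
  have hxM : ∀ n, indicatorLp (B n) ∈ M n := fun n => (hM n _).2 fun i hi => by simp [hi]
  have hsep : ∀ m n, m ≠ n → 1 ≤ ‖indicatorLp (B m) - indicatorLp (B n)‖ := fun m n hmn => by
    obtain ⟨i, hi⟩ := hBne m
    exact one_le_norm_indicatorLp_sub hi ((hBdisj m n hmn).notMem_of_mem_left hi)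
  exact half_le_lambdaAdj_bot infinite_univ hxM (fun n => norm_indicatorLp (hBne n)) hsep

/-- For the subspaces `M_n ⊆ ℓ∞` of sequences supported on the members `B_n` of a
partition of `ℕ` into nonempty finite disjoint sets, `λ_ℕ[M_n, {0}] ≥ 1/2`. -/
theorem stmt16 (B : ℕ → Set ℕ)
    (hBne : ∀ n, (B n).Nonempty) (hBfin : ∀ n, (B n).Finite)
    (hBdisj : ∀ i j, i ≠ j → Disjoint (B i) (B j))
    (hBcover : ⋃ n, B n = Set.univ)
    (M : ℕ → Submodule ℝ (lp (fun _ : ℕ => ℝ) ⊤))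
    (hM : ∀ (n : ℕ) (f : lp (fun _ : ℕ => ℝ) ⊤),
      f ∈ M n ↔ ∀ i ∉ B n, (f : ∀ _ : ℕ, ℝ) i = 0) :
    (1 : ℝ) / 2 ≤ lambdaAdj Set.univ M (fun _ => (⊥ : Submodule ℝ (lp (fun _ : ℕ => ℝ) ⊤))) :=
  stmt16_general B hBne hBdisj M hM
end

section
/- Let X, Y be Banach spaces and (A_n) a sequence of strictly singular bounded operators from X to Y. Then for every ε > 0 and every sequence of infinite-dimensional closed subspaces K_n of the graphs G_{A_n} (indexed along an infinite subset of ℕ), there exist a further infinite subset and infinite-dimensional closed subspaces L_n ⊆ K_n such that the restriction operators corresponding to L_n have norm at most ε; in particular the strictly singular uniform λ-adjustment SSλ[A_n, 0] of (A_n) with the zero operator equals 0. -/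
/-- The strictly singular uniform λ-adjustment `SSλ_{N'}[M_n, P_n]`. -/
noncomputable def ssLambdaAdj {X : Type*} [NormedAddCommGroup X] [NormedSpace ℝ X]
    (N' : Set ℕ) (M P : ℕ → Submodule ℝ X) : ℝ :=
  sInf {lam : ℝ | 0 ≤ lam ∧
    ∀ N'' ⊆ N', N''.Infinite → ∀ K : ℕ → Submodule ℝ X,
      (∀ n ∈ N'', K n ≤ M n ∧ IsClosed ((K n : Set X)) ∧ ¬FiniteDimensional ℝ (K n)) →
      ∃ N''' ⊆ N'', N'''.Infinite ∧ ∃ L : ℕ → Submodule ℝ X,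
        (∀ n ∈ N''', L n ≤ K n ∧ IsClosed ((L n : Set X)) ∧ ¬FiniteDimensional ℝ (L n)) ∧
        lambdaAdj N''' L P ≤ lam}

/-!
Strict singularity of `A` yields, in any closed infinite-dimensional subspace, unit vectors
`z₀, z₁, …` with `‖A zₖ‖` as small as we like, each chosen in the kernels of norming functionals
`f₀, …, fₖ₋₁` of the previous ones. Such a triangular system (`fₖ zₖ = 1`, `fₖ zⱼ = 0` for
`j > k`) recovers coefficients with `|aₖ| ≤ 2ᵏ ‖∑ aᵢ zᵢ‖`, so `‖A zₖ‖ ≤ ε 4⁻ᵏ / 2` forces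
`‖A x‖ ≤ ε ‖x‖` on the closed span, which is infinite-dimensional. Transported to the graph along
`x ↦ (x, A x)`, every unit vector `(x, A x)` of the resulting subspace lies within `ε` of
`(x, 0)`, a point of the graph of `0`, so the λ-adjustment with `0` is at most `ε`.
-/

open Filter Finset Submodule

theorem Submodule.not_finiteDimensional_inf_ker {K V : Type*} [DivisionRing K] [AddCommGroup V]
    [Module K V] {Z : Submodule K V} (hZ : ¬FiniteDimensional K Z) (f : V →ₗ[K] K) :
    ¬FiniteDimensional K (Z ⊓ LinearMap.ker f : Submodule K V) := fun h =>
  hZ <| (fg_iff_finiteDimensional Z).mp <| fg_of_fg_map_of_fg_inf_ker f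
    (IsNoetherian.noetherian _) ((fg_iff_finiteDimensional _).mpr h)

section TriangularSystem

variable {E F : Type*} [NormedAddCommGroup E] [NormedSpace ℝ E]
  [NormedAddCommGroup F] [NormedSpace ℝ F]

structure IsTriangularSystem (z : ℕ → E) (f : ℕ → E →L[ℝ] ℝ) : Prop where
  norm_le_one : ∀ k, ‖z k‖ ≤ 1
  norm_dual_le_one : ∀ k, ‖f k‖ ≤ 1
  apply_self : ∀ k, f k (z k) = 1
  apply_of_lt : ∀ {k j}, k < j → f k (z j) = 0

variable {z : ℕ → E} {f : ℕ → E →L[ℝ] ℝ}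

theorem IsTriangularSystem.apply_sum_range (h : IsTriangularSystem z f) (a : ℕ → ℝ) {k n : ℕ}
    (hkn : k < n) :
    f k (∑ i ∈ range n, a i • z i) = a k + ∑ i ∈ range k, a i * f k (z i) := by
  have hvanish : ∑ i ∈ Ico (k + 1) n, a i * f k (z i) = 0 :=
    sum_eq_zero fun i hi => by rw [h.apply_of_lt (mem_Ico.mp hi).1, mul_zero]
  simp only [map_sum, map_smul, smul_eq_mul]
  rw [← sum_range_add_sum_Ico _ hkn, hvanish, sum_range_succ, h.apply_self]
  ring

theorem IsTriangularSystem.abs_le_two_pow_mul_norm_sum (h : IsTriangularSystem z f) (a : ℕ → ℝ)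
    {k n : ℕ} (hkn : k < n) : |a k| ≤ 2 ^ k * ‖∑ i ∈ range n, a i • z i‖ := by
  set x := ∑ i ∈ range n, a i • z i
  induction k using Nat.strong_induction_on with
  | _ k ih =>
  have hfx : |f k x| ≤ ‖x‖ :=
    ((f k).le_opNorm x).trans (mul_le_of_le_one_left (norm_nonneg _) (h.norm_dual_le_one k))
  have hterm : ∀ i ∈ range k, |a i * f k (z i)| ≤ 2 ^ i * ‖x‖ := fun i hi => by
    have hfz : |f k (z i)| ≤ 1 := ((f k).le_opNorm (z i)).trans
      (mul_le_one₀ (h.norm_dual_le_one k) (norm_nonneg _) (h.norm_le_one i))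
    rw [abs_mul]
    exact (mul_le_of_le_one_right (abs_nonneg _) hfz).trans
      (ih i (mem_range.mp hi) ((mem_range.mp hi).trans hkn))
  have hgeom : ∑ i ∈ range k, (2 : ℝ) ^ i = 2 ^ k - 1 := by
    linear_combination geom_sum_mul (2 : ℝ) k
  calc |a k| = |f k x - ∑ i ∈ range k, a i * f k (z i)| := by
        rw [h.apply_sum_range a hkn, add_sub_cancel_right]
    _ ≤ |f k x| + ∑ i ∈ range k, |a i * f k (z i)| :=
        (abs_sub _ _).trans (add_le_add_right (abs_sum_le_sum_abs _ _) _)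
    _ ≤ ‖x‖ + ∑ i ∈ range k, 2 ^ i * ‖x‖ := add_le_add hfx (sum_le_sum hterm)
    _ = 2 ^ k * ‖x‖ := by rw [← sum_mul, hgeom]; ring

theorem IsTriangularSystem.abs_le_two_pow_mul_norm_linearCombination
    (h : IsTriangularSystem z f) (c : ℕ →₀ ℝ) (k : ℕ) :
    |c k| ≤ 2 ^ k * ‖Finsupp.linearCombination ℝ z c‖ := by
  obtain ⟨n, hn⟩ := (insert k c.support).exists_nat_subset_range
  rw [Finsupp.linearCombination_apply, Finsupp.sum_of_support_subset c
    (fun i hi => hn (mem_insert_of_mem hi)) (fun i a => a • z i) fun i _ => zero_smul ℝ _]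
  exact h.abs_le_two_pow_mul_norm_sum c (mem_range.mp (hn (mem_insert_self k _)))

theorem IsTriangularSystem.linearIndependent (h : IsTriangularSystem z f) :
    LinearIndependent ℝ z :=
  linearIndependent_iff.mpr fun c hc => Finsupp.ext fun k =>
    abs_nonpos_iff.mp (by simpa [hc] using h.abs_le_two_pow_mul_norm_linearCombination c k)

theorem IsTriangularSystem.not_finiteDimensional_topologicalClosure_span
    (h : IsTriangularSystem z f) :
    ¬FiniteDimensional ℝ (span ℝ (Set.range z)).topologicalClosure := fun _ =>
  have := finiteDimensional_of_le (span ℝ (Set.range z)).le_topologicalClosure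
  Module.Finite.not_linearIndependent_of_infinite _ (linearIndependent_span h.linearIndependent)

theorem IsTriangularSystem.norm_apply_le_of_mem_topologicalClosure_span
    (h : IsTriangularSystem z f) (T : E →L[ℝ] F) {ε : ℝ} (hε : 0 ≤ ε)
    (hT : ∀ k, ‖T (z k)‖ ≤ ε / 2 * 4⁻¹ ^ k) {x : E}
    (hx : x ∈ (span ℝ (Set.range z)).topologicalClosure) : ‖T x‖ ≤ ε * ‖x‖ := by
  have hspan : (span ℝ (Set.range z) : Set E) ⊆ {x | ‖T x‖ ≤ ε * ‖x‖} := by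
    rintro _ hmem
    obtain ⟨c, rfl⟩ := Finsupp.mem_span_range_iff_exists_finsupp.mp hmem
    rw [← Finsupp.linearCombination_apply]
    set x := Finsupp.linearCombination ℝ z c
    have hterm : ∀ i, ‖c i • T (z i)‖ ≤ ε / 2 * ‖x‖ * 2⁻¹ ^ i := fun i => by
      rw [norm_smul, Real.norm_eq_abs]
      calc |c i| * ‖T (z i)‖ ≤ 2 ^ i * ‖x‖ * (ε / 2 * 4⁻¹ ^ i) :=
            mul_le_mul (h.abs_le_two_pow_mul_norm_linearCombination c i) (hT i)
              (norm_nonneg _) (by positivity)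
        _ = ε / 2 * ‖x‖ * 2⁻¹ ^ i := by
            have h4 : (2 : ℝ) ^ i * 4⁻¹ ^ i = 2⁻¹ ^ i := by rw [← mul_pow]; norm_num
            linear_combination ε / 2 * ‖x‖ * h4
    calc ‖T x‖ = ‖∑ i ∈ c.support, c i • T (z i)‖ := by
          simp only [x, Finsupp.linearCombination_apply, Finsupp.sum, map_sum, map_smul]
      _ ≤ ∑ i ∈ c.support, ε / 2 * ‖x‖ * 2⁻¹ ^ i := norm_sum_le_of_le _ fun i _ => hterm i
      _ ≤ ε / 2 * ‖x‖ * ∑' i : ℕ, (2⁻¹ : ℝ) ^ i := by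
          rw [← mul_sum]
          have hsum : Summable fun i : ℕ => (2⁻¹ : ℝ) ^ i :=
            summable_geometric_of_lt_one (by norm_num) (by norm_num)
          exact mul_le_mul_of_nonneg_left (hsum.sum_le_tsum _ fun i _ => by positivity)
            (by positivity)
      _ = ε * ‖x‖ := by rw [tsum_geometric_inv_two]; ring
  rw [← SetLike.mem_coe, topologicalClosure_coe] at hx
  exact closure_minimal hspan (isClosed_le (by fun_prop) (by fun_prop)) hx

end TriangularSystem

section StrictlySingular

variable {E F : Type*} [NormedAddCommGroup E] [NormedSpace ℝ E]
  [NormedAddCommGroup F] [NormedSpace ℝ F]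

/-- Strict singularity, in the form: `T` is bounded below on no infinite-dimensional closed
subspace. -/
def IsStrictlySingular (T : E →L[ℝ] F) : Prop :=
  ∀ δ > (0 : ℝ), ∀ W : Submodule ℝ E, IsClosed (W : Set E) → ¬FiniteDimensional ℝ W →
    ∃ w ∈ W, w ≠ 0 ∧ ‖T w‖ < δ * ‖w‖

variable {T : E →L[ℝ] F}

theorem IsStrictlySingular.exists_unit_dual_pair_norm_apply_le (hT : IsStrictlySingular T)
    {δ : ℝ} (hδ : 0 < δ) {W : Submodule ℝ E} (hWc : IsClosed (W : Set E))
    (hW : ¬FiniteDimensional ℝ W) :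
    ∃ w ∈ W, ∃ g : E →L[ℝ] ℝ, ‖w‖ = 1 ∧ ‖g‖ = 1 ∧ g w = 1 ∧ ‖T w‖ ≤ δ := by
  obtain ⟨w, hwW, hw0, hTw⟩ := hT δ hδ W hWc hW
  have hw : ‖w‖ ≠ 0 := norm_ne_zero_iff.mpr hw0
  have hunit : ‖‖w‖⁻¹ • w‖ = 1 := by rw [norm_smul, norm_inv, norm_norm, inv_mul_cancel₀ hw]
  obtain ⟨g, hg, hgw⟩ := exists_dual_vector ℝ (‖w‖⁻¹ • w) (by rw [hunit]; exact one_ne_zero)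
  refine ⟨‖w‖⁻¹ • w, W.smul_mem _ hwW, g, hunit, hg, by rw [hgw, hunit, RCLike.ofReal_one], ?_⟩
  rw [map_smul, norm_smul, norm_inv, norm_norm, inv_mul_le_iff₀ (norm_pos_iff.mpr hw0), mul_comm]
  exact hTw.le

theorem IsStrictlySingular.exists_isTriangularSystem (hT : IsStrictlySingular T)
    {δ : ℕ → ℝ} (hδ : ∀ k, 0 < δ k) {Z : Submodule ℝ E} (hZc : IsClosed (Z : Set E))
    (hZ : ¬FiniteDimensional ℝ Z) :
    ∃ z f, IsTriangularSystem z f ∧ (∀ k, z k ∈ Z) ∧ ∀ k, ‖T (z k)‖ ≤ δ k := by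
  let Admissible := {W : Submodule ℝ E // IsClosed (W : Set E) ∧ ¬FiniteDimensional ℝ W}
  choose w hwW g hw hg hgw hTw using fun k (W : Admissible) =>
    hT.exists_unit_dual_pair_norm_apply_le (hδ k) W.2.1 W.2.2
  let next (k : ℕ) (W : Admissible) : Admissible :=
    ⟨W.1 ⊓ LinearMap.ker (g k W : E →ₗ[ℝ] ℝ), W.2.1.inter (g k W).isClosed_ker,
      not_finiteDimensional_inf_ker W.2.2 _⟩
  let W (k : ℕ) : Admissible := Nat.rec ⟨Z, hZc, hZ⟩ next k
  have hanti : Antitone fun k => (W k).1 := antitone_nat_of_succ_le fun k => inf_le_left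
  refine ⟨fun k => w k (W k), fun k => g k (W k),
    ⟨fun k => (hw k _).le, fun k => (hg k _).le, fun k => hgw k _, fun {k j} hkj => ?_⟩,
    fun k => hanti (Nat.zero_le k) (hwW k _), fun k => hTw k _⟩
  exact (hanti (Nat.succ_le_of_lt hkj) (hwW j (W j))).2

theorem IsStrictlySingular.exists_le_norm_apply_le (hT : IsStrictlySingular T) {ε : ℝ}
    (hε : 0 < ε) {Z : Submodule ℝ E} (hZc : IsClosed (Z : Set E))
    (hZ : ¬FiniteDimensional ℝ Z) :
    ∃ Z' ≤ Z, IsClosed (Z' : Set E) ∧ ¬FiniteDimensional ℝ Z' ∧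
      ∀ x ∈ Z', ‖T x‖ ≤ ε * ‖x‖ := by
  obtain ⟨z, f, hzf, hzZ, hTz⟩ :=
    hT.exists_isTriangularSystem (δ := fun k => ε / 2 * 4⁻¹ ^ k) (fun k => by positivity) hZc hZ
  exact ⟨(span ℝ (Set.range z)).topologicalClosure,
    topologicalClosure_minimal _ (span_le.mpr (Set.range_subset_iff.mpr hzZ)) hZc,
    isClosed_topologicalClosure _, hzf.not_finiteDimensional_topologicalClosure_span,
    fun _ hx => hzf.norm_apply_le_of_mem_topologicalClosure_span T hε.le hTz hx⟩

end StrictlySingular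

theorem IsStrictlySingular.exists_le_graph_norm_snd_le {X Y : Type*} [NormedAddCommGroup X]
    [NormedSpace ℝ X] [NormedAddCommGroup Y] [NormedSpace ℝ Y] {A : X →L[ℝ] Y}
    (hA : IsStrictlySingular A) {ε : ℝ} (hε : 0 < ε) {K : Submodule ℝ (X × Y)}
    (hKA : K ≤ LinearMap.graph A.toLinearMap) (hKc : IsClosed (K : Set (X × Y)))
    (hK : ¬FiniteDimensional ℝ K) :
    ∃ L ≤ K, IsClosed (L : Set (X × Y)) ∧ ¬FiniteDimensional ℝ L ∧
      ∀ p ∈ L, ‖p.2‖ ≤ ε * ‖p.1‖ := by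
  let G : X →L[ℝ] X × Y := (ContinuousLinearMap.id ℝ X).prod A
  have hG : Topology.IsClosedEmbedding G :=
    Function.LeftInverse.isClosedEmbedding (f := Prod.fst) (fun _ => rfl) continuous_fst
      G.continuous
  have hKG : (K.comap (G : X →ₗ[ℝ] X × Y)).map (G : X →ₗ[ℝ] X × Y) = K := by
    rw [map_comap_eq, inf_eq_right]
    exact hKA.trans (LinearMap.graph_eq_range_prod _).le
  obtain ⟨Z, hZK, hZc, hZ, hAZ⟩ := hA.exists_le_norm_apply_le hε
    (Z := K.comap (G : X →ₗ[ℝ] X × Y)) (hKc.preimage G.continuous)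
    fun _ => hK (hKG ▸ inferInstance)
  refine ⟨Z.map (G : X →ₗ[ℝ] X × Y), map_le_iff_le_comap.mpr hZK, ?_, fun _ => hZ ?_, ?_⟩
  · rw [map_coe]
    exact hG.isClosedMap _ hZc
  · exact Module.Finite.equiv (equivMapOfInjective _ hG.injective Z).symm
  · rintro _ ⟨x, hx, rfl⟩
    exact hAZ x hx

theorem lambdaAdj_le_of_forall_exists_norm_sub_le {X : Type*} [NormedAddCommGroup X]
    [NormedSpace ℝ X] {N : Set ℕ} {M P : ℕ → Submodule ℝ X} {ε : ℝ} (hε : 0 ≤ ε)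
    (h : ∀ n ∈ N, ∀ x ∈ M n, ‖x‖ = 1 → ∃ y ∈ P n, ‖x - y‖ ≤ ε) :
    lambdaAdj N M P ≤ ε := by
  refine csInf_le ⟨0, fun _ hl => hl.1⟩ ⟨hε, fun η hη N' hN' hN'inf x hx => ?_⟩
  choose! y hyP hy using fun n hn => h n (hN' hn) (x n) (hx n hn).1 (hx n hn).2
  have : (atTop ⊓ 𝓟 N').NeBot :=
    frequently_mem_iff_neBot.mp (Nat.cofinite_eq_atTop ▸ hN'inf.frequently_cofinite)
  refine ⟨N', subset_rfl, hN'inf, y, hyP, 0,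
    limsup_le_of_le (isCoboundedUnder_le_of_le _ fun _ => norm_nonneg _) ?_⟩
  exact eventually_inf_principal.mpr (Eventually.of_forall fun n hn => by
    simpa using (hy n hn).trans (le_add_of_nonneg_right hη.le))

theorem sInf_eq_zero_of_forall_pos_mem {s : Set ℝ} (hs : ∀ x ∈ s, 0 ≤ x)
    (h : ∀ ε > (0 : ℝ), ε ∈ s) : sInf s = 0 :=
  csInf_eq_of_forall_ge_of_forall_gt_exists_lt ⟨1, h 1 one_pos⟩ hs
    fun w hw => ⟨w / 2, h _ (half_pos hw), half_lt_self hw⟩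

theorem ssLambdaAdj_eq_zero {X : Type*} [NormedAddCommGroup X] [NormedSpace ℝ X]
    {N : Set ℕ} {M P : ℕ → Submodule ℝ X}
    (h : ∀ ε > (0 : ℝ), ∀ N' ⊆ N, N'.Infinite → ∀ K : ℕ → Submodule ℝ X,
      (∀ n ∈ N', K n ≤ M n ∧ IsClosed (K n : Set X) ∧ ¬FiniteDimensional ℝ (K n)) →
      ∃ N'' ⊆ N', N''.Infinite ∧ ∃ L : ℕ → Submodule ℝ X,
        ∀ n ∈ N'', L n ≤ K n ∧ IsClosed (L n : Set X) ∧ ¬FiniteDimensional ℝ (L n) ∧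
          ∀ x ∈ L n, ‖x‖ = 1 → ∃ y ∈ P n, ‖x - y‖ ≤ ε) :
    ssLambdaAdj N M P = 0 :=
  sInf_eq_zero_of_forall_pos_mem (fun _ hl => hl.1) fun ε hε =>
    ⟨hε.le, fun N' hN' hN'inf K hK => by
      obtain ⟨N'', hN'', hN''inf, L, hL⟩ := h ε hε N' hN' hN'inf K hK
      exact ⟨N'', hN'', hN''inf, L, fun n hn => ⟨(hL n hn).1, (hL n hn).2.1, (hL n hn).2.2.1⟩,
        lambdaAdj_le_of_forall_exists_norm_sub_le hε.le fun n hn => (hL n hn).2.2.2⟩⟩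

theorem exists_le_graph_norm_snd_le_of_forall {X Y : Type*} [NormedAddCommGroup X]
    [NormedSpace ℝ X] [NormedAddCommGroup Y] [NormedSpace ℝ Y] {A : ℕ → X →L[ℝ] Y}
    (hA : ∀ n, IsStrictlySingular (A n)) {ε : ℝ} (hε : 0 < ε) {N : Set ℕ}
    {K : ℕ → Submodule ℝ (X × Y)}
    (hK : ∀ n ∈ N, K n ≤ LinearMap.graph (A n).toLinearMap ∧
      IsClosed (K n : Set (X × Y)) ∧ ¬FiniteDimensional ℝ (K n)) :
    ∃ L : ℕ → Submodule ℝ (X × Y), ∀ n ∈ N, L n ≤ K n ∧ IsClosed (L n : Set (X × Y)) ∧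
      ¬FiniteDimensional ℝ (L n) ∧ ∀ p ∈ L n, ‖p.2‖ ≤ ε * ‖p.1‖ := by
  choose! L hLK hL using fun n hn =>
    (hA n).exists_le_graph_norm_snd_le hε (hK n hn).1 (hK n hn).2.1 (hK n hn).2.2
  exact ⟨L, fun n hn => ⟨hLK n hn, hL n hn⟩⟩

theorem stmt17_general {X Y : Type*} [NormedAddCommGroup X] [NormedSpace ℝ X]
    [NormedAddCommGroup Y] [NormedSpace ℝ Y]
    (A : ℕ → (X →L[ℝ] Y))
    (hss : ∀ n, ∀ ε > (0 : ℝ), ∀ Z : Submodule ℝ X, IsClosed ((Z : Set X)) →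
      ¬FiniteDimensional ℝ Z → ∃ z ∈ Z, z ≠ 0 ∧ ‖A n z‖ < ε * ‖z‖) :
    (∀ ε > (0 : ℝ), ∀ N'' : Set ℕ, N''.Infinite → ∀ K : ℕ → Submodule ℝ (X × Y),
      (∀ n ∈ N'', K n ≤ LinearMap.graph (A n).toLinearMap ∧
        IsClosed ((K n : Set (X × Y))) ∧ ¬FiniteDimensional ℝ (K n)) →
      ∃ N''' ⊆ N'', N'''.Infinite ∧ ∃ L : ℕ → Submodule ℝ (X × Y),
        ∀ n ∈ N''', L n ≤ K n ∧ IsClosed ((L n : Set (X × Y))) ∧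
          ¬FiniteDimensional ℝ (L n) ∧ ∀ p ∈ L n, ‖p.2‖ ≤ ε * ‖p.1‖) ∧
    ssLambdaAdj Set.univ (fun n => LinearMap.graph (A n).toLinearMap)
      (fun _ => LinearMap.graph (0 : X →ₗ[ℝ] Y)) = 0 := by
  refine ⟨fun ε hε N'' hN'' K hK =>
    ⟨N'', subset_rfl, hN'', exists_le_graph_norm_snd_le_of_forall hss hε hK⟩,
    ssLambdaAdj_eq_zero fun ε hε N'' _ hN'' K hK => ?_⟩
  obtain ⟨L, hL⟩ := exists_le_graph_norm_snd_le_of_forall hss hε hK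
  refine ⟨N'', subset_rfl, hN'', L, fun n hn => ⟨(hL n hn).1, (hL n hn).2.1, (hL n hn).2.2.1,
    fun p hp hp1 => ⟨(p.1, 0), by simp [LinearMap.mem_graph_iff], ?_⟩⟩⟩
  calc ‖p - (p.1, 0)‖ = ‖p.2‖ := by simp [Prod.norm_def]
    _ ≤ ε * ‖p.1‖ := (hL n hn).2.2.2 p hp
    _ ≤ ε := mul_le_of_le_one_right hε.le (hp1 ▸ norm_fst_le p)

/-- Strict singularity of a sequence of bounded operators implies that, inside their
graphs, infinite-dimensional closed subspaces can always be refined to ones on which the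
corresponding restriction operators have norm at most `ε`; in particular the strictly
singular uniform λ-adjustment of `(A_n)` with the zero operator is `0`. -/
theorem stmt17 {X Y : Type*} [NormedAddCommGroup X] [NormedSpace ℝ X] [CompleteSpace X]
    [NormedAddCommGroup Y] [NormedSpace ℝ Y] [CompleteSpace Y]
    (A : ℕ → (X →L[ℝ] Y))
    (hss : ∀ n, ∀ ε > (0 : ℝ), ∀ Z : Submodule ℝ X, IsClosed ((Z : Set X)) →
      ¬FiniteDimensional ℝ Z → ∃ z ∈ Z, z ≠ 0 ∧ ‖A n z‖ < ε * ‖z‖) :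
    (∀ ε > (0 : ℝ), ∀ N'' : Set ℕ, N''.Infinite → ∀ K : ℕ → Submodule ℝ (X × Y),
      (∀ n ∈ N'', K n ≤ LinearMap.graph (A n).toLinearMap ∧
        IsClosed ((K n : Set (X × Y))) ∧ ¬FiniteDimensional ℝ (K n)) →
      ∃ N''' ⊆ N'', N'''.Infinite ∧ ∃ L : ℕ → Submodule ℝ (X × Y),
        ∀ n ∈ N''', L n ≤ K n ∧ IsClosed ((L n : Set (X × Y))) ∧
          ¬FiniteDimensional ℝ (L n) ∧ ∀ p ∈ L n, ‖p.2‖ ≤ ε * ‖p.1‖) ∧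
    ssLambdaAdj Set.univ (fun n => LinearMap.graph (A n).toLinearMap)
      (fun _ => LinearMap.graph (0 : X →ₗ[ℝ] Y)) = 0 :=
  stmt17_general A hss
end
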